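/- arXiv:1706.08882 — 7 statements merged into one kernel-verified Lean document; each statement's English description precedes it below -/
import Mathlib

section
/- Let ρ₋, ρ₊ > 0 and u₋, u₊, β be real numbers, and set σ₀ = (√ρ₋·u₋ + √ρ₊·u₊)/(√ρ₋ + √ρ₊). Then the functions u_δ(t) = σ₀ + β·t, x(t) = σ₀·t + (1/2)β·t², w(t) = −√(ρ₋·ρ₊)·(u₊ − u₋)·t satisfy x(0) = 0, w(0) = 0, and for every t ≥ 0: (i) x′(t) = u_δ(t); (ii) w′(t) = u_δ(t)·(ρ₊ − ρ₋) − (ρ₊·(u₊ + β·t) − ρ₋·(u₋ + β·t)); (iii) (w·u_δ)′(t) = u_δ(t)·(ρ₊·(u₊ + β·t) − ρ₋·(u₋ + β·t)) − (ρ₊·(u₊ + β·t)² − ρ₋·(u₋ + β·t)²) + β·w(t). -/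
/-!
In the frame moving with the friction (velocities shifted by `β t`) the delta shock is the
frictionless one: its speed `σ₀` is the `√ρ`-weighted mean of `u₋` and `u₊`, and the weight grows
linearly at the rate `σ₀ [ρ] - [ρ u]`. The weighted mean is characterised by
`√ρ₊ (σ₀ - u₊) = √ρ₋ (u₋ - σ₀)`; this gives the rate `-√(ρ₋ ρ₊) (u₊ - u₋)` and, after squaring,
`ρ₊ (σ₀ - u₊)² = ρ₋ (σ₀ - u₋)²`, which is exactly what the third Rankine–Hugoniot condition
requires once the second one is substituted into it.
-/

open Real

section WeightedMean

variable {ρm ρp um up σ : ℝ}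

theorem sqrt_mul_sub_eq_of_weighted_mean (hσ : σ * (√ρm + √ρp) = √ρm * um + √ρp * up) :
    √ρp * (σ - up) = √ρm * (um - σ) := by
  linear_combination hσ

theorem mul_sq_sub_eq_of_weighted_mean (hρm : 0 ≤ ρm) (hρp : 0 ≤ ρp)
    (hσ : σ * (√ρm + √ρp) = √ρm * um + √ρp * up) :
    ρp * (σ - up) ^ 2 = ρm * (σ - um) ^ 2 := by
  have h := congrArg (· ^ 2) (sqrt_mul_sub_eq_of_weighted_mean hσ)
  simp only [mul_pow, sq_sqrt hρm, sq_sqrt hρp] at h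
  linear_combination h

theorem jump_rate_eq_of_weighted_mean (hρm : 0 ≤ ρm) (hρp : 0 ≤ ρp)
    (hσ : σ * (√ρm + √ρp) = √ρm * um + √ρp * up) :
    σ * (ρp - ρm) - (ρp * up - ρm * um) = -√(ρm * ρp) * (up - um) := by
  rw [sqrt_mul hρm]
  linear_combination (√ρp - √ρm) * hσ + (up - σ) * sq_sqrt hρp + (σ - um) * sq_sqrt hρm

end WeightedMean

theorem hasDerivAt_delta_shock {ρm ρp um up β σ c : ℝ}
    (hbal : ρp * (σ - up) ^ 2 = ρm * (σ - um) ^ 2)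
    (hc : c = σ * (ρp - ρm) - (ρp * up - ρm * um)) (t : ℝ) :
    HasDerivAt (fun s => c * s)
        ((σ + β * t) * (ρp - ρm) - (ρp * (up + β * t) - ρm * (um + β * t))) t ∧
      HasDerivAt (fun s => c * s * (σ + β * s))
        ((σ + β * t) * (ρp * (up + β * t) - ρm * (um + β * t))
          - (ρp * (up + β * t) ^ 2 - ρm * (um + β * t) ^ 2) + β * (c * t)) t := by
  have hw : HasDerivAt (fun s => c * s) c t := by
    simpa using (hasDerivAt_id t).const_mul c
  have hu : HasDerivAt (fun s => σ + β * s) β t := by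
    simpa using ((hasDerivAt_id t).const_mul β).const_add σ
  refine ⟨hw.congr_deriv (by rw [hc]; ring), (hw.mul hu).congr_deriv ?_⟩
  rw [hc]
  linear_combination hbal

/-- Generalized Rankine–Hugoniot conditions for the delta shock of the
pressureless Euler equations with Coulomb-like friction. -/
theorem stmt_0 (ρm ρp um up β : ℝ) (hρm : 0 < ρm) (hρp : 0 < ρp)
    (σ₀ : ℝ)
    (hσ₀ : σ₀ = (Real.sqrt ρm * um + Real.sqrt ρp * up) / (Real.sqrt ρm + Real.sqrt ρp))
    (uδ x w : ℝ → ℝ)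
    (huδ : ∀ t, uδ t = σ₀ + β * t)
    (hx : ∀ t, x t = σ₀ * t + (1 / 2) * β * t ^ 2)
    (hw : ∀ t, w t = -Real.sqrt (ρm * ρp) * (up - um) * t) :
    x 0 = 0 ∧ w 0 = 0 ∧
    ∀ t : ℝ, 0 ≤ t →
      HasDerivAt x (uδ t) t ∧
      HasDerivAt w (uδ t * (ρp - ρm) - (ρp * (up + β * t) - ρm * (um + β * t))) t ∧
      HasDerivAt (fun s => w s * uδ s)
        (uδ t * (ρp * (up + β * t) - ρm * (um + β * t))
          - (ρp * (up + β * t) ^ 2 - ρm * (um + β * t) ^ 2) + β * w t) t := by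
  obtain rfl : uδ = fun t => σ₀ + β * t := funext huδ
  obtain rfl : x = fun t => σ₀ * t + (1 / 2) * β * t ^ 2 := funext hx
  obtain rfl : w = fun t => -√(ρm * ρp) * (up - um) * t := funext hw
  have hσ : σ₀ * (√ρm + √ρp) = √ρm * um + √ρp * up :=
    (eq_div_iff (by positivity)).mp hσ₀
  refine ⟨by simp, by simp, fun t _ => ⟨?_, hasDerivAt_delta_shock
    (mul_sq_sub_eq_of_weighted_mean hρm.le hρp.le hσ)
    (jump_rate_eq_of_weighted_mean hρm.le hρp.le hσ).symm t⟩⟩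
  have := ((hasDerivAt_id t).const_mul σ₀).add ((hasDerivAt_pow 2 t).const_mul (1 / 2 * β))
  exact this.congr_deriv (by ring)
end

section
/- Let ρ_l, ρ_r > 0, let v_l, v_r, s be real, let A > 0 and α > 0, and write P_l = −A·ρ_l^(−α), P_r = −A·ρ_r^(−α). If s·(ρ_r − ρ_l) = ρ_r·v_r − ρ_l·v_l and s·(ρ_r·(v_r + P_r) − ρ_l·(v_l + P_l)) = ρ_r·(v_r + P_r)·v_r − ρ_l·(v_l + P_l)·v_l, then (v_r − v_l)·((v_r − A·ρ_r^(−α)) − (v_l − A·ρ_l^(−α))) = 0; that is, either v_r = v_l or v_r − A/ρ_r^α = v_l − A/ρ_l^α. -/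
/-- From the Rankine–Hugoniot conditions for the conservative system with
generalized Chaplygin pressure, any discontinuity satisfies `v_r = v_l` or
`v_r − A/ρ_r^α = v_l − A/ρ_l^α`. -/
theorem stmt_7 (ρl ρr vl vr s A α : ℝ) (hρl : 0 < ρl) (hρr : 0 < ρr)
    (hA : 0 < A) (hα : 0 < α)
    (h1 : s * (ρr - ρl) = ρr * vr - ρl * vl)
    (h2 : s * (ρr * (vr + -(A * ρr ^ (-α))) - ρl * (vl + -(A * ρl ^ (-α))))
        = ρr * (vr + -(A * ρr ^ (-α))) * vr - ρl * (vl + -(A * ρl ^ (-α))) * vl) :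
    (vr - vl) * ((vr - A * ρr ^ (-α)) - (vl - A * ρl ^ (-α))) = 0 ∧
    (vr = vl ∨ vr - A * ρr ^ (-α) = vl - A * ρl ^ (-α)) := by
  set p := A * ρl ^ (-α) with hp
  set q := A * ρr ^ (-α) with hq
  have key : ρr * (vr - s) * ((vr - q) - (vl - p)) = 0 := by
    linear_combination (vl - p) * h1 - h2
  rcases mul_eq_zero.mp key with h | hD
  · rcases mul_eq_zero.mp h with h | h
    · exact absurd h hρr.ne'
    · have hvl : ρl * (vl - s) = 0 := by linear_combination ρr * h + h1
      have hvl' : vl - s = 0 := by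
        rcases mul_eq_zero.mp hvl with h' | h'
        · exact absurd h' hρl.ne'
        · exact h'
      have hv : vr = vl := by linarith
      exact ⟨by rw [hv]; ring, Or.inl hv⟩
  · exact ⟨by rw [hD]; ring, Or.inr (by linarith)⟩
end

section
/- Let ρ₋, ρ₊ > 0, A > 0, 0 < α < 1, and u₋, u₊ real with u₊ < u₋ − A·ρ₋^(−α). Define w₀ = √( ρ₊·ρ₋·(u₊ − u₋)·((u₊ − u₋) − (A·ρ₊^(−α) − A·ρ₋^(−α))) + (1/4)·(A·ρ₊^(1−α) − A·ρ₋^(1−α))² ) − (1/2)·(A·ρ₊^(1−α) − A·ρ₋^(1−α)). Then the quantity under the square root is nonnegative and w₀ > 0. -/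
/-- Positivity of the delta shock strength coefficient `w₀`. -/
theorem stmt_10 (ρm ρp A α um up : ℝ) (hρm : 0 < ρm) (hρp : 0 < ρp)
    (hA : 0 < A) (hα0 : 0 < α) (hα1 : α < 1)
    (h : up < um - A * ρm ^ (-α)) :
    0 ≤ ρp * ρm * (up - um) * ((up - um) - (A * ρp ^ (-α) - A * ρm ^ (-α)))
        + (1 / 4) * (A * ρp ^ (1 - α) - A * ρm ^ (1 - α)) ^ 2 ∧
    0 < Real.sqrt (ρp * ρm * (up - um) * ((up - um) - (A * ρp ^ (-α) - A * ρm ^ (-α)))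
          + (1 / 4) * (A * ρp ^ (1 - α) - A * ρm ^ (1 - α)) ^ 2)
        - (1 / 2) * (A * ρp ^ (1 - α) - A * ρm ^ (1 - α)) := by
  have hpm : 0 < A * ρm ^ (-α) := mul_pos hA (Real.rpow_pos_of_pos hρm _)
  have hpp : 0 < A * ρp ^ (-α) := mul_pos hA (Real.rpow_pos_of_pos hρp _)
  have hd : up - um < 0 := by linarith
  have hd2 : (up - um) - (A * ρp ^ (-α) - A * ρm ^ (-α)) < 0 := by linarith
  have hT : 0 < ρp * ρm * (up - um) * ((up - um) - (A * ρp ^ (-α) - A * ρm ^ (-α))) := by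
    have := mul_pos_of_neg_of_neg hd hd2
    calc (0:ℝ) < (ρp * ρm) * ((up - um) * ((up - um) - (A * ρp ^ (-α) - A * ρm ^ (-α)))) :=
          mul_pos (mul_pos hρp hρm) this
      _ = _ := by ring
  set B := A * ρp ^ (1 - α) - A * ρm ^ (1 - α) with hB
  set S := ρp * ρm * (up - um) * ((up - um) - (A * ρp ^ (-α) - A * ρm ^ (-α)))
      + (1 / 4) * B ^ 2 with hS
  have hSB : B ^ 2 / 4 < S := by
    have : 0 ≤ B ^ 2 := sq_nonneg B
    simp only [hS]; linarith
  have hS0 : 0 ≤ S := by positivity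
  have habs : |B| / 2 < Real.sqrt S := by
    rw [show |B| / 2 = Real.sqrt ((|B| / 2) ^ 2) from (Real.sqrt_sq (by positivity)).symm]
    apply Real.sqrt_lt_sqrt (by positivity)
    calc (|B| / 2) ^ 2 = B ^ 2 / 4 := by rw [div_pow, sq_abs]; ring
      _ < S := hSB
  have hle : B / 2 ≤ |B| / 2 := by
    have := le_abs_self B; linarith
  refine ⟨hS0, ?_⟩
  have : (1/2) * B = B / 2 := by ring
  linarith
end

section
/- Let ρ₋, ρ₊ > 0 with ρ₊ ≠ ρ₋, A > 0, 0 < α < 1, and u₋, u₊ real with u₊ ≤ u₋ − A·ρ₋^(−α). Define w₀ = √( ρ₊·ρ₋·(u₊ − u₋)·((u₊ − u₋) − (A·ρ₊^(−α) − A·ρ₋^(−α))) + (1/4)·(A·ρ₊^(1−α) − A·ρ₋^(1−α))² ) − (1/2)·(A·ρ₊^(1−α) − A·ρ₋^(1−α)) and v_δ = (ρ₊·u₊ − ρ₋·u₋ + w₀)/(ρ₊ − ρ₋). Then v_δ satisfies (ρ₊ − ρ₋)·v_δ² − (2·(ρ₊·u₊ − ρ₋·u₋) − (A·ρ₊^(1−α)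 − A·ρ₋^(1−α)))·v_δ + (ρ₊·u₊² − ρ₋·u₋²) − (A·u₊·ρ₊^(1−α) − A·u₋·ρ₋^(1−α)) = 0. -/
/-- The Dirac-value `v_δ` of the delta shock satisfies the quadratic equation
obtained from the generalized Rankine–Hugoniot conditions. -/
theorem stmt_11 (ρm ρp A α um up : ℝ) (hρm : 0 < ρm) (hρp : 0 < ρp)
    (hne : ρp ≠ ρm) (hA : 0 < A) (hα0 : 0 < α) (hα1 : α < 1)
    (h : up ≤ um - A * ρm ^ (-α))
    (w₀ vδ : ℝ)
    (hw₀ : w₀ = Real.sqrt (ρp * ρm * (up - um)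
            * ((up - um) - (A * ρp ^ (-α) - A * ρm ^ (-α)))
            + (1 / 4) * (A * ρp ^ (1 - α) - A * ρm ^ (1 - α)) ^ 2)
        - (1 / 2) * (A * ρp ^ (1 - α) - A * ρm ^ (1 - α)))
    (hvδ : vδ = (ρp * up - ρm * um + w₀) / (ρp - ρm)) :
    (ρp - ρm) * vδ ^ 2
      - (2 * (ρp * up - ρm * um) - (A * ρp ^ (1 - α) - A * ρm ^ (1 - α))) * vδ
      + (ρp * up ^ 2 - ρm * um ^ 2)
      - (A * up * ρp ^ (1 - α) - A * um * ρm ^ (1 - α)) = 0 := by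
  have hp1 : ρp ^ (1 - α) = ρp * ρp ^ (-α) := by
    rw [show (1 - α) = 1 + (-α) by ring, Real.rpow_add hρp, Real.rpow_one]
  have hm1 : ρm ^ (1 - α) = ρm * ρm ^ (-α) := by
    rw [show (1 - α) = 1 + (-α) by ring, Real.rpow_add hρm, Real.rpow_one]
  have hapos : 0 < A * ρp ^ (-α) := mul_pos hA (Real.rpow_pos_of_pos hρp _)
  have hbpos : 0 < A * ρm ^ (-α) := mul_pos hA (Real.rpow_pos_of_pos hρm _)
  have hX : 0 ≤ ρp * ρm * (up - um)
            * ((up - um) - (A * ρp ^ (-α) - A * ρm ^ (-α)))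
            + (1 / 4) * (A * ρp ^ (1 - α) - A * ρm ^ (1 - α)) ^ 2 := by
    have h2 : 0 ≤ (up - um) * ((up - um) - (A * ρp ^ (-α) - A * ρm ^ (-α))) := by
      have := mul_nonneg (a := -(up - um)) (b := -((up - um) - (A * ρp ^ (-α) - A * ρm ^ (-α))))
        (by linarith) (by linarith)
      nlinarith
    nlinarith [sq_nonneg (A * ρp ^ (1 - α) - A * ρm ^ (1 - α)), mul_pos hρp hρm]
  set s := Real.sqrt (ρp * ρm * (up - um)
            * ((up - um) - (A * ρp ^ (-α) - A * ρm ^ (-α)))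
            + (1 / 4) * (A * ρp ^ (1 - α) - A * ρm ^ (1 - α)) ^ 2) with hs
  have hsq : s ^ 2 = ρp * ρm * (up - um)
            * ((up - um) - (A * ρp ^ (-α) - A * ρm ^ (-α)))
            + (1 / 4) * (A * ρp ^ (1 - α) - A * ρm ^ (1 - α)) ^ 2 :=
    Real.sq_sqrt hX
  have hD : ρp - ρm ≠ 0 := sub_ne_zero.mpr hne
  have hv : vδ * (ρp - ρm) = ρp * up - ρm * um + w₀ := by
    rw [hvδ]; field_simp
  set B := A * ρp ^ (1 - α) - A * ρm ^ (1 - α) with hB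
  have H : (ρp - ρm) * ((ρp - ρm) * vδ ^ 2
      - (2 * (ρp * up - ρm * um) - B) * vδ
      + (ρp * up ^ 2 - ρm * um ^ 2)
      - (A * up * ρp ^ (1 - α) - A * um * ρm ^ (1 - α))) = 0 := by
    linear_combination
      (vδ * (ρp - ρm) - (ρp * up - ρm * um) + w₀ + B) * hv
      + hsq + (w₀ + s + B / 2) * hw₀
      + A * ρm * (up - um) * hp1 - A * ρp * (up - um) * hm1
  exact (mul_eq_zero.mp H).resolve_left hD
end

section
/- Let ρ₋, ρ₊ > 0 with ρ₊ ≠ ρ₋, A > 0, 0 < α < 1, and u₋, u₊ real with u₊ < u₋ − A·ρ₋^(−α). Define w₀ = √( ρ₊·ρ₋·(u₊ − u₋)·((u₊ − u₋) − (A·ρ₊^(−α) − A·ρ₋^(−α))) + (1/4)·(A·ρ₊^(1−α) − A·ρ₋^(1−α))² ) − (1/2)·(A·ρ₊^(1−α) − A·ρ₋^(1−α)) and v_δ = (ρ₊·u₊ − ρ₋·u₋ + w₀)/(ρ₊ − ρ₋). Then the over-compressive entropy inequalities hold: u₊ < v_δ < u₋ − A·ρ₋^(−α). -/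
private lemma aux_lt_of_sq {a b : ℝ} (ha : 0 ≤ a) (hb : 0 ≤ b) (h : a ^ 2 < b ^ 2) :
    a < b := by nlinarith

/-- The over-compressive entropy inequalities `u₊ < v_δ < u₋ − A ρ₋^(−α)` for
the delta shock of the approximated system. -/
theorem stmt_13 (ρm ρp A α um up : ℝ) (hρm : 0 < ρm) (hρp : 0 < ρp)
    (hne : ρp ≠ ρm) (hA : 0 < A) (hα0 : 0 < α) (hα1 : α < 1)
    (h : up < um - A * ρm ^ (-α))
    (w₀ vδ : ℝ)
    (hw₀ : w₀ = Real.sqrt (ρp * ρm * (up - um)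
            * ((up - um) - (A * ρp ^ (-α) - A * ρm ^ (-α)))
            + (1 / 4) * (A * ρp ^ (1 - α) - A * ρm ^ (1 - α)) ^ 2)
        - (1 / 2) * (A * ρp ^ (1 - α) - A * ρm ^ (1 - α)))
    (hvδ : vδ = (ρp * up - ρm * um + w₀) / (ρp - ρm)) :
    up < vδ ∧ vδ < um - A * ρm ^ (-α) := by
  have hbp : (0:ℝ) < ρp ^ (-α) := Real.rpow_pos_of_pos hρp _
  have hcp : (0:ℝ) < ρm ^ (-α) := Real.rpow_pos_of_pos hρm _
  set b := A * ρp ^ (-α) with hbdef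
  set c := A * ρm ^ (-α) with hcdef
  have hb : 0 < b := mul_pos hA hbp
  have hc : 0 < c := mul_pos hA hcp
  have h1 : A * ρp ^ (1 - α) = ρp * b := by
    rw [hbdef, show (1:ℝ) - α = 1 + (-α) by ring, Real.rpow_add hρp, Real.rpow_one]
    ring
  have h2 : A * ρm ^ (1 - α) = ρm * c := by
    rw [hcdef, show (1:ℝ) - α = 1 + (-α) by ring, Real.rpow_add hρm, Real.rpow_one]
    ring
  rw [h1, h2] at hw₀
  set S := ρp * b - ρm * c with hSdef
  set E := ρp * ρm * (up - um) * ((up - um) - (b - c)) + 1 / 4 * S ^ 2 with hEdef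
  have hbb : 0 < ρp * b := mul_pos hρp hb
  have hcc : 0 < ρm * c := mul_pos hρm hc
  have h4 : up - um < 0 := by linarith
  have h5 : up - um + c < 0 := by linarith
  have h6 : (up - um) - (b - c) < 0 := by linarith
  have hQpos : 0 < ρp * ρm * (up - um) * ((up - um) - (b - c)) := by
    calc (0:ℝ) < ρp * ρm * ((up - um) * ((up - um) - (b - c))) :=
          mul_pos (mul_pos hρp hρm) (mul_pos_of_neg_of_neg h4 h6)
      _ = ρp * ρm * (up - um) * ((up - um) - (b - c)) := by ring
  have hE0 : 0 ≤ E := by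
    rw [hEdef]; exact add_nonneg hQpos.le (by positivity)
  have hw : Real.sqrt E = w₀ + 1 / 2 * S := by rw [hw₀]; ring
  have hwnn : 0 ≤ w₀ + 1 / 2 * S := hw ▸ Real.sqrt_nonneg E
  have hsq : (w₀ + 1 / 2 * S) ^ 2 = E := by rw [← hw, Real.sq_sqrt hE0]
  -- the two comparison values
  have hTc : ρm * c < ρm * (um - up) :=
    mul_lt_mul_of_pos_left (by linarith) hρm
  have hRc : ρp * c < ρp * (um - up) :=
    mul_lt_mul_of_pos_left (by linarith) hρp
  have hTS : 0 ≤ ρm * (um - up) + 1 / 2 * S := by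
    rw [hSdef]; linarith [hTc, hbb, hcc]
  have hRS : 0 ≤ (ρp * (um - up) - (ρp - ρm) * c) + 1 / 2 * S := by
    rw [hSdef]; linarith [hRc, hbb, hcc]
  rcases hne.lt_or_gt with hlt | hlt
  · -- ρp < ρm
    have key1 : E < (ρm * (um - up) + 1 / 2 * S) ^ 2 := by
      have idA : (ρm * (um - up) + 1 / 2 * S) ^ 2 - E
          = ρm * (ρm - ρp) * ((up - um) * (up - um + c)) := by
        rw [hEdef, hSdef]; ring
      linarith [idA, mul_pos (mul_pos hρm (sub_pos.mpr hlt))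
        (mul_pos_of_neg_of_neg h4 h5)]
    have key2 : ((ρp * (um - up) - (ρp - ρm) * c) + 1 / 2 * S) ^ 2 < E := by
      have idB : E - ((ρp * (um - up) - (ρp - ρm) * c) + 1 / 2 * S) ^ 2
          = -(ρp * (ρp - ρm)) * (((up - um) - (b - c)) * (up - um + c)) := by
        rw [hEdef, hSdef]; ring
      linarith [idB, mul_pos (mul_pos hρp (sub_pos.mpr hlt))
        (mul_pos_of_neg_of_neg h6 h5)]
    have step1 : w₀ < ρm * (um - up) := by
      have := aux_lt_of_sq hwnn hTS (by rw [hsq]; exact key1)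
      linarith
    have step2 : ρp * (um - up) - (ρp - ρm) * c < w₀ := by
      have := aux_lt_of_sq hRS hwnn (by rw [hsq]; exact key2)
      linarith
    have hden : ρp - ρm < 0 := by linarith
    constructor
    · rw [hvδ, lt_div_iff_of_neg hden]
      linarith [step1]
    · rw [hvδ, div_lt_iff_of_neg hden]
      linarith [step2]
  · -- ρm < ρp
    have key1 : (ρm * (um - up) + 1 / 2 * S) ^ 2 < E := by
      have idA : E - (ρm * (um - up) + 1 / 2 * S) ^ 2
          = ρm * (ρp - ρm) * ((up - um) * (up - um + c)) := by
        rw [hEdef, hSdef]; ring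
      linarith [idA, mul_pos (mul_pos hρm (sub_pos.mpr hlt))
        (mul_pos_of_neg_of_neg h4 h5)]
    have key2 : E < ((ρp * (um - up) - (ρp - ρm) * c) + 1 / 2 * S) ^ 2 := by
      have idB : ((ρp * (um - up) - (ρp - ρm) * c) + 1 / 2 * S) ^ 2 - E
          = ρp * (ρp - ρm) * (((up - um) - (b - c)) * (up - um + c)) := by
        rw [hEdef, hSdef]; ring
      linarith [idB, mul_pos (mul_pos hρp (sub_pos.mpr hlt))
        (mul_pos_of_neg_of_neg h6 h5)]
    have step1 : ρm * (um - up) < w₀ := by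
      have := aux_lt_of_sq hTS hwnn (by rw [hsq]; exact key1)
      linarith
    have step2 : w₀ < ρp * (um - up) - (ρp - ρm) * c := by
      have := aux_lt_of_sq hwnn hRS (by rw [hsq]; exact key2)
      linarith
    have hden : 0 < ρp - ρm := by linarith
    constructor
    · rw [hvδ, lt_div_iff₀ hden]
      linarith [step1]
    · rw [hvδ, div_lt_iff₀ hden]
      linarith [step2]
end

section
/- Let ρ₋, ρ₊ > 0 and A, α, β, u₋, u₊, v_δ, w₀ be real numbers satisfying w₀ = v_δ·(ρ₊ − ρ₋) − (ρ₊·u₊ − ρ₋·u₋) and w₀·v_δ = v_δ·((ρ₊·u₊ − ρ₋·u₋) − (A·ρ₊^(1−α) − A·ρ₋^(1−α))) − (ρ₊·u₊² − ρ₋·u₋²) + (A·u₊·ρ₊^(1−α) − A·u₋·ρ₋^(1−α)). Define, for each real t, C(t) = (ρ₊·(u₊ + β·t − A·ρ₊^(−α)) − ρ₋·(u₋ + β·t − A·ρ₋^(−α)))·(v_δ + β·t) + (ρ₋·(u₋ + β·t)·(u₋ + β·t − A·ρ₋^(−α)) − ρ₊·(u₊ + β·t)·(u₊ + β·t − A·ρ₊^(−α)))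 − w₀·(v_δ + 2β·t). Then C(t) = −β·w₀·t for every t. -/
/-- The boundary coefficient `C(t)` arising in the distributional verification
of the delta shock solution equals `−β w₀ t`. -/
theorem stmt_15 (ρm ρp A α β um up vδ w₀ : ℝ) (hρm : 0 < ρm) (hρp : 0 < ρp)
    (h1 : w₀ = vδ * (ρp - ρm) - (ρp * up - ρm * um))
    (h2 : w₀ * vδ = vδ * ((ρp * up - ρm * um) - (A * ρp ^ (1 - α) - A * ρm ^ (1 - α)))
        - (ρp * up ^ 2 - ρm * um ^ 2) + (A * up * ρp ^ (1 - α) - A * um * ρm ^ (1 - α))) :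
    ∀ t : ℝ,
      (ρp * (up + β * t - A * ρp ^ (-α)) - ρm * (um + β * t - A * ρm ^ (-α)))
          * (vδ + β * t)
        + (ρm * (um + β * t) * (um + β * t - A * ρm ^ (-α))
            - ρp * (up + β * t) * (up + β * t - A * ρp ^ (-α)))
        - w₀ * (vδ + 2 * β * t)
      = -(β * w₀ * t) := by
  intro t
  have e1 : ρm ^ ((1:ℝ) - α) = ρm * ρm ^ (-α) := by
    rw [sub_eq_add_neg, Real.rpow_add hρm, Real.rpow_one]
  have e2 : ρp ^ ((1:ℝ) - α) = ρp * ρp ^ (-α) := by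
    rw [sub_eq_add_neg, Real.rpow_add hρp, Real.rpow_one]
  rw [e1, e2] at h2
  linear_combination -h2 - (β * t) * h1
end

section
/- Let ρ₋ > 0, 0 < α < 1, and u₋, u₊ real with u₊ < u₋; set A₀ = ρ₋^α·(u₋ − u₊) and, for A > A₀, ρ*(A) = (ρ₋^α·A/(A − A₀))^(1/α). Fix β real and t > 0, and define x₁(A, t) = ((ρ*(A)·u₊ − ρ₋·u₋)/(ρ*(A) − ρ₋))·t + (1/2)β·t² (the shock position) and x₂(t) = u₊·t + (1/2)β·t² (the contact discontinuity position). Then as A → A₀⁺: (i) ρ*(A) → +∞; (ii) the shock speed (ρ*(A)·u₊ − ρ₋·u₋)/(ρ*(A) − ρ₋) + β·t → u₊ + β·t; (iii) ρ*(A)·(x₂(t) − x₁(A, t)) → ρ₋·(u₋ − u₊)·t; and (iv) ρ*(A)·(u₊ + β·t)·(x₂(t) − x₁(A, t)) → ρ₋·(u₋ − u₊)·(u₊ + β·t)·t. -/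
open Filter Topology

/-! As `A → A₀⁺` the base `ρ₋^α A / (A - A₀)` of `ρ*(A)` blows up because `A₀ > 0`,
hence so does `ρ*(A)`. Everything else is a statement about
`r = ρ*(A) → ∞`: the Rankine–Hugoniot speed `(r u₊ - ρ₋ u₋)/(r - ρ₋)` equals
`u₊ - ρ₋ (u₋ - u₊)/(r - ρ₋)`, so it tends to `u₊` while `r` times its gap to `u₊` tends to
`ρ₋ (u₋ - u₊)`; and `x₂ - x₁(A) = (u₊ - speed) t`. -/

lemma tendsto_mul_div_sub_nhdsGT_atTop {c a : ℝ} (hc : 0 < c) (ha : 0 < a) :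
    Tendsto (fun x : ℝ => c * x / (x - a)) (𝓝[>] a) atTop := by
  have hsub : Tendsto (· - a) (𝓝[>] a) (𝓝[>] (0 : ℝ)) := by
    rw [← sub_self a]
    exact Filter.map_subRight_nhdsGT.le
  have hnum : Tendsto (fun x : ℝ => c * x) (𝓝[>] a) (𝓝 (c * a)) :=
    ((continuous_const_mul c).tendsto a).mono_left nhdsWithin_le_nhds
  simpa only [div_eq_mul_inv, Function.comp_def] using
    hnum.pos_mul_atTop (mul_pos hc ha) (tendsto_inv_nhdsGT_zero.comp hsub)

lemma shock_speed_eq {r ρ u v : ℝ} (hr : r ≠ ρ) :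
    (r * v - ρ * u) / (r - ρ) = v - ρ * (u - v) / (r - ρ) := by
  field_simp [sub_ne_zero.mpr hr]
  ring

lemma tendsto_const_div_sub_atTop (b ρ : ℝ) :
    Tendsto (fun r : ℝ => b / (r - ρ)) atTop (𝓝 0) :=
  tendsto_const_nhds.div_atTop (tendsto_atTop_add_const_right _ (-ρ) tendsto_id)

lemma tendsto_shock_speed_atTop (ρ u v : ℝ) :
    Tendsto (fun r : ℝ => (r * v - ρ * u) / (r - ρ)) atTop (𝓝 v) := by
  have hlim : Tendsto (fun r : ℝ => v - ρ * (u - v) / (r - ρ)) atTop (𝓝 (v - 0)) :=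
    tendsto_const_nhds.sub (tendsto_const_div_sub_atTop _ ρ)
  rw [sub_zero] at hlim
  refine hlim.congr' ?_
  filter_upwards [eventually_ne_atTop ρ] with r hr
  rw [shock_speed_eq hr]

lemma tendsto_mul_sub_shock_speed_atTop (ρ u v : ℝ) :
    Tendsto (fun r : ℝ => r * (v - (r * v - ρ * u) / (r - ρ))) atTop (𝓝 (ρ * (u - v))) := by
  have hlim : Tendsto (fun r : ℝ => ρ * (u - v) + ρ * (ρ * (u - v)) / (r - ρ)) atTop
      (𝓝 (ρ * (u - v) + 0)) :=
    tendsto_const_nhds.add (tendsto_const_div_sub_atTop _ ρ)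
  rw [add_zero] at hlim
  refine hlim.congr' ?_
  filter_upwards [eventually_ne_atTop ρ] with r hr
  rw [shock_speed_eq hr]
  field_simp [sub_ne_zero.mpr hr]
  ring

theorem stmt_18_general (ρm α um up β t : ℝ) (hρm : 0 < ρm) (hα0 : 0 < α)
    (h : up < um)
    (A₀ : ℝ) (hA₀ : A₀ = ρm ^ α * (um - up))
    (ρs : ℝ → ℝ) (hρs : ∀ A : ℝ, ρs A = ((ρm ^ α * A / (A - A₀)) ^ (1 / α) : ℝ))
    (x₁ : ℝ → ℝ)
    (hx₁ : ∀ A : ℝ, x₁ A = (ρs A * up - ρm * um) / (ρs A - ρm) * t + (1 / 2) * β * t ^ 2)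
    (x₂ : ℝ) (hx₂ : x₂ = up * t + (1 / 2) * β * t ^ 2) :
    Tendsto ρs (nhdsWithin A₀ (Set.Ioi A₀)) atTop ∧
    Tendsto (fun A : ℝ => (ρs A * up - ρm * um) / (ρs A - ρm) + β * t)
      (nhdsWithin A₀ (Set.Ioi A₀)) (nhds (up + β * t)) ∧
    Tendsto (fun A : ℝ => ρs A * (x₂ - x₁ A))
      (nhdsWithin A₀ (Set.Ioi A₀)) (nhds (ρm * (um - up) * t)) ∧
    Tendsto (fun A : ℝ => ρs A * (up + β * t) * (x₂ - x₁ A))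
      (nhdsWithin A₀ (Set.Ioi A₀)) (nhds (ρm * (um - up) * (up + β * t) * t)) := by
  have hρmα : 0 < ρm ^ α := Real.rpow_pos_of_pos hρm α
  have hA₀pos : 0 < A₀ := hA₀ ▸ mul_pos hρmα (sub_pos.mpr h)
  have hρs_top : Tendsto ρs (𝓝[>] A₀) atTop := by
    simpa only [Function.comp_def, ← hρs] using (tendsto_rpow_atTop (one_div_pos.mpr hα0)).comp
      (tendsto_mul_div_sub_nhdsGT_atTop hρmα hA₀pos)
  have hgap : Tendsto (fun A => ρs A * (up - (ρs A * up - ρm * um) / (ρs A - ρm))) (𝓝[>] A₀)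
      (𝓝 (ρm * (um - up))) :=
    (tendsto_mul_sub_shock_speed_atTop ρm um up).comp hρs_top
  have hgap_eq : ∀ A,
      ρs A * (x₂ - x₁ A) = ρs A * (up - (ρs A * up - ρm * um) / (ρs A - ρm)) * t :=
    fun A => by rw [hx₁, hx₂]; ring
  refine ⟨hρs_top, ((tendsto_shock_speed_atTop ρm um up).comp hρs_top).add_const (β * t), ?_, ?_⟩
  · simpa only [hgap_eq] using hgap.mul_const t
  · simpa only [mul_right_comm _ (up + β * t), hgap_eq] using
      (hgap.mul_const t).mul_const (up + β * t)

/-- Lemma 5.2: as `A → A₀⁺` the intermediate density blows up, the shock and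
contact speeds coalesce to `u₊ + βt`, and the mass and momentum trapped between
the two waves converge to those of the limiting delta shock. -/
theorem stmt_18 (ρm α um up β t : ℝ) (hρm : 0 < ρm) (hα0 : 0 < α) (hα1 : α < 1)
    (h : up < um) (ht : 0 < t)
    (A₀ : ℝ) (hA₀ : A₀ = ρm ^ α * (um - up))
    (ρs : ℝ → ℝ) (hρs : ∀ A : ℝ, ρs A = ((ρm ^ α * A / (A - A₀)) ^ (1 / α) : ℝ))
    (x₁ : ℝ → ℝ)
    (hx₁ : ∀ A : ℝ, x₁ A = (ρs A * up - ρm * um) / (ρs A - ρm) * t + (1 / 2) * β * t ^ 2)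
    (x₂ : ℝ) (hx₂ : x₂ = up * t + (1 / 2) * β * t ^ 2) :
    Tendsto ρs (nhdsWithin A₀ (Set.Ioi A₀)) atTop ∧
    Tendsto (fun A : ℝ => (ρs A * up - ρm * um) / (ρs A - ρm) + β * t)
      (nhdsWithin A₀ (Set.Ioi A₀)) (nhds (up + β * t)) ∧
    Tendsto (fun A : ℝ => ρs A * (x₂ - x₁ A))
      (nhdsWithin A₀ (Set.Ioi A₀)) (nhds (ρm * (um - up) * t)) ∧
    Tendsto (fun A : ℝ => ρs A * (up + β * t) * (x₂ - x₁ A))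
      (nhdsWithin A₀ (Set.Ioi A₀)) (nhds (ρm * (um - up) * (up + β * t) * t)) :=
  stmt_18_general ρm α um up β t hρm hα0 h A₀ hA₀ ρs hρs x₁ hx₁ x₂ hx₂
end
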